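/- Let n ≥ 1, m = 2n, and let C ∈ ℂ^{2n×4n} be a normalized system of boundary conditions of rank 2n that is dissipative. Suppose that for some j ∈ {0, 1, …, 2n−1} exactly one row of C has order j and exactly one row has order 2n−1−j; let (b₀, b₁) be the leading pair of the row of order j and (c₀, c₁) the leading pair of the row of order 2n−1−j. Then b₀·conj(c₀) = b₁·conj(c₁). -/

import Mathlib

/-!
Multiplying the `k`-th boundary values by `τ^k` (`τ > 0`) maps `ker C` onto the kernel of
`rescale C τ` and multiplies `q_J` by the positive factor `τ^(2n-1)`, so these systems stay
dissipative. As `τ → 0` they tend to the principal part `rescale C 0`, which keeps only the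
leading pair of each row. Normalization makes its rows independent, so every vector of its kernel
is a limit of vectors of the kernels of the rescaled systems, and the principal part is
dissipative as well. Since `q_J` pairs the positions `j` and `2n-1-j`, testing the principal part
on boundary vectors supported there, which only the two rows of orders `j` and `2n-1-j` see,
gives `0 ≤ ± Im (z (b₀ c̄₀ - b₁ c̄₁))` for every `z ∈ ℂ`.
-/

open ComplexOrder

/-- A system of boundary conditions of order `2n` is a matrix `C ∈ ℂ^{2n×4n}`; we index
the `4n` columns by `Fin (2n) ⊕ Fin (2n)`: `Sum.inl k` is the coefficient of `y^{(k)}(0)`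
and `Sum.inr k` that of `y^{(k)}(1)`.  The order of row `j` is the largest `k` with
`(C_{j,k}, C_{j,2n+k}) ≠ (0,0)`. -/
noncomputable def rowOrder {m : ℕ} (C : Matrix (Fin m) (Fin m ⊕ Fin m) ℂ) (j : Fin m) : ℕ :=
  sSup {k : ℕ | ∃ h : k < m, C j (Sum.inl ⟨k, h⟩) ≠ 0 ∨ C j (Sum.inr ⟨k, h⟩) ≠ 0}

/-- The leading pair `(α_j, β_j) = (C_{j,k_j}, C_{j,m+k_j})` of row `j`. -/
noncomputable def leadingPair {m : ℕ} (C : Matrix (Fin m) (Fin m ⊕ Fin m) ℂ) (j : Fin m) :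
    ℂ × ℂ :=
  if h : rowOrder C j < m then
    (C j (Sum.inl ⟨rowOrder C j, h⟩), C j (Sum.inr ⟨rowOrder C j, h⟩))
  else 0

/-- The system `C` is normalized if, for every value `k`, the leading pairs of the rows
of order `k` are linearly independent in `ℂ²`. -/
def IsNormalized {m : ℕ} (C : Matrix (Fin m) (Fin m ⊕ Fin m) ℂ) : Prop :=
  ∀ k : ℕ, LinearIndependent ℂ (fun j : {j : Fin m // rowOrder C j = k} => leadingPair C j.1)

/-- The quadratic form `q_J(u) = i·(−1)^{n+1} · Σ_{p=0}^{2n−1} (−1)^{p+1} u_p·conj(u_{2n−1−p})`. -/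
noncomputable def qJ (n : ℕ) (u : Fin (2 * n) → ℂ) : ℂ :=
  Complex.I * (-1 : ℂ) ^ (n + 1) *
    ∑ p : Fin (2 * n), (-1 : ℂ) ^ ((p : ℕ) + 1) * u p * (starRingEnd ℂ) (u p.rev)

/-- The system `C` is dissipative if `q_J(v) − q_J(u) ≥ 0` for every `(u,v)` satisfying
`Σ_k C_{j,k}u_k + C_{j,2n+k}v_k = 0` for all rows `j` (dissipativity of the operator
generated by `l₀(y) = (−i)^{2n}y^{(2n)}` and these boundary conditions). -/
def IsDissipativeBC (n : ℕ) (C : Matrix (Fin (2 * n)) (Fin (2 * n) ⊕ Fin (2 * n)) ℂ) : Prop :=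
  ∀ u v : Fin (2 * n) → ℂ,
    (∀ j, ∑ k, (C j (Sum.inl k) * u k + C j (Sum.inr k) * v k) = 0) →
    0 ≤ qJ n v - qJ n u

open Filter Topology Matrix

theorem Fin.ne_rev_of_even {m : ℕ} (hm : Even m) (p : Fin m) : p ≠ p.rev := fun h => by
  have := congrArg Fin.val h
  rw [Fin.val_rev] at this
  obtain ⟨k, rfl⟩ := hm
  omega

namespace BoundaryConditions

section Approximation

variable {α m ι 𝕜 : Type*} [Fintype m] [DecidableEq m] [Fintype ι] [NormedField 𝕜]

lemma exists_tendsto_of_mulVec_eq_zero {l : Filter α} {A : α → Matrix m ι 𝕜}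
    {A₀ : Matrix m ι 𝕜} (hA : Tendsto A l (𝓝 A₀)) {R : Matrix ι m 𝕜} (hR : A₀ * R = 1)
    {w : ι → 𝕜} (hw : A₀ *ᵥ w = 0) :
    ∃ x : α → ι → 𝕜, Tendsto x l (𝓝 w) ∧ ∀ᶠ a in l, A a *ᵥ x a = 0 := by
  have hAR : Tendsto (fun a => A a * R) l (𝓝 1) :=
    hR ▸ ((continuous_id.matrix_mul continuous_const).tendsto A₀).comp hA
  have hinv : Tendsto (fun a => (A a * R)⁻¹) l (𝓝 1) := by
    have hdet : ContinuousAt Ring.inverse (1 : Matrix m m 𝕜).det := by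
      simpa using continuousAt_inv₀ (one_ne_zero (α := 𝕜))
    have := (continuousAt_matrix_inv _ hdet).tendsto.comp hAR
    rwa [inv_one] at this
  have hAw : Tendsto (fun a => A a *ᵥ w) l (𝓝 0) :=
    hw ▸ ((continuous_id.matrix_mulVec continuous_const).tendsto A₀).comp hA
  have hmulVec : Continuous fun p : Matrix m m 𝕜 × (m → 𝕜) => p.1 *ᵥ p.2 :=
    continuous_fst.matrix_mulVec continuous_snd
  refine ⟨fun a => w - R *ᵥ ((A a * R)⁻¹ *ᵥ (A a *ᵥ w)), ?_, ?_⟩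
  · simpa using tendsto_const_nhds.sub
      (((continuous_const.matrix_mulVec continuous_id).tendsto _).comp
        ((hmulVec.tendsto _).comp (hinv.prodMk_nhds hAw)))
  · have hdet : ∀ᶠ a in l, (A a * R).det ≠ 0 :=
      ((continuous_id.matrix_det.tendsto 1).comp hAR).eventually_ne (by simp)
    filter_upwards [hdet] with a ha
    rw [mulVec_sub, mulVec_mulVec, mulVec_mulVec,
      mul_nonsing_inv _ (isUnit_iff_ne_zero.mpr ha), one_mulVec, sub_self]

end Approximation

section RowOrder

variable {m : ℕ} (C : Matrix (Fin m) (Fin m ⊕ Fin m) ℂ)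

def derivOrder : Fin m ⊕ Fin m → ℕ := Sum.elim Fin.val Fin.val

@[simp] lemma derivOrder_inl (k : Fin m) : derivOrder (Sum.inl k) = k := rfl

@[simp] lemma derivOrder_inr (k : Fin m) : derivOrder (Sum.inr k) = k := rfl

lemma rowOrder_lt (r : Fin m) : rowOrder C r < m := by
  rcases Set.eq_empty_or_nonempty
    {k : ℕ | ∃ h : k < m, C r (Sum.inl ⟨k, h⟩) ≠ 0 ∨ C r (Sum.inr ⟨k, h⟩) ≠ 0} with h | h
  · simp [rowOrder, h, r.pos]
  · exact (Nat.sSup_mem h ⟨m, fun k ⟨hk, _⟩ => hk.le⟩).1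

lemma apply_eq_zero_of_rowOrder_lt {r : Fin m} {col : Fin m ⊕ Fin m}
    (h : rowOrder C r < derivOrder col) : C r col = 0 := by
  by_contra hne
  refine h.not_ge (le_csSup ⟨m, fun k ⟨hk, _⟩ => hk.le⟩ ?_)
  cases col with
  | inl k => exact ⟨k.isLt, .inl hne⟩
  | inr k => exact ⟨k.isLt, .inr hne⟩

lemma leadingPair_eq {r : Fin m} {k : ℕ} (hr : rowOrder C r = k) (hk : k < m) :
    leadingPair C r = (C r (Sum.inl ⟨k, hk⟩), C r (Sum.inr ⟨k, hk⟩)) := by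
  subst hr
  exact dif_pos hk

end RowOrder

section Rescale

variable {m : ℕ} (C : Matrix (Fin m) (Fin m ⊕ Fin m) ℂ)

noncomputable def rescale (τ : ℂ) : Matrix (Fin m) (Fin m ⊕ Fin m) ℂ :=
  Matrix.of fun r col => τ ^ (rowOrder C r - derivOrder col) * C r col

lemma continuous_rescale : Continuous (rescale C) :=
  continuous_pi fun _ => continuous_pi fun _ => (continuous_pow _).mul continuous_const

lemma rescale_mulVec_pow (τ : ℂ) (w : Fin m ⊕ Fin m → ℂ) :
    rescale C τ *ᵥ (fun col => τ ^ derivOrder col * w col)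
      = fun r => τ ^ rowOrder C r * (C *ᵥ w) r := by
  funext r
  simp only [mulVec, dotProduct, Finset.mul_sum]
  refine Finset.sum_congr rfl fun col _ => ?_
  rcases le_or_gt (derivOrder col) (rowOrder C r) with h | h
  · simp only [rescale, of_apply]
    rw [← pow_sub_mul_pow τ h]
    ring
  · simp [rescale, apply_eq_zero_of_rowOrder_lt C h]

lemma rescale_zero_apply (r : Fin m) (col : Fin m ⊕ Fin m) :
    rescale C 0 r col = if derivOrder col = rowOrder C r then C r col else 0 := by
  rcases lt_trichotomy (derivOrder col) (rowOrder C r) with h | h | h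
  · simp [rescale, h.ne, Nat.sub_ne_zero_of_lt h]
  · simp [rescale, h]
  · simp [rescale, h.ne', apply_eq_zero_of_rowOrder_lt C h]

lemma rescale_zero_mulVec_apply (w : Fin m ⊕ Fin m → ℂ) (r : Fin m) :
    (rescale C 0 *ᵥ w) r = (leadingPair C r).1 * w (Sum.inl ⟨rowOrder C r, rowOrder_lt C r⟩)
      + (leadingPair C r).2 * w (Sum.inr ⟨rowOrder C r, rowOrder_lt C r⟩) := by
  have hk (k : Fin m) : (k : ℕ) = rowOrder C r ↔ k = ⟨rowOrder C r, rowOrder_lt C r⟩ :=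
    Fin.ext_iff (b := ⟨_, _⟩) |>.symm
  simp [mulVec, dotProduct, Fintype.sum_sum_type, rescale_zero_apply,
    leadingPair_eq C rfl (rowOrder_lt C r), ite_mul, hk]

end Rescale

section Normalized

variable {m : ℕ} {C : Matrix (Fin m) (Fin m ⊕ Fin m) ℂ}

lemma linearIndependent_rescale_zero (hC : IsNormalized C) :
    LinearIndependent ℂ (rescale C 0).row := by
  rw [Fintype.linearIndependent_iff]
  intro g hg r₀
  set k := rowOrder C r₀
  have hk := rowOrder_lt C r₀
  have hpair : ∑ s : {r // rowOrder C r = k}, g s • leadingPair C s = 0 := by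
    have hcol (col : Fin m ⊕ Fin m) (hc : derivOrder col = k) :
        ∑ s : {r // rowOrder C r = k}, g s * C s col = 0 := by
      have := congrFun hg col
      simp only [Finset.sum_apply, Pi.smul_apply, smul_eq_mul, row, rescale_zero_apply, hc,
        mul_ite, mul_zero] at this
      rwa [Pi.zero_apply, ← Finset.sum_filter,
        Finset.sum_subtype (p := (rowOrder C · = k)) _ fun r => by simp [eq_comm]] at this
    have hlp (s : {r // rowOrder C r = k}) :
        leadingPair C s = (C s (Sum.inl ⟨k, hk⟩), C s (Sum.inr ⟨k, hk⟩)) :=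
      leadingPair_eq C s.2 hk
    ext
    · simpa [hlp, Prod.fst_sum] using hcol (Sum.inl ⟨k, hk⟩) rfl
    · simpa [hlp, Prod.snd_sum] using hcol (Sum.inr ⟨k, hk⟩) rfl
  exact Fintype.linearIndependent_iff.mp (hC k) (fun s => g s) hpair ⟨r₀, rfl⟩

lemma exists_rescale_zero_mul_eq_one (hC : IsNormalized C) :
    ∃ R : Matrix (Fin m ⊕ Fin m) (Fin m) ℂ, rescale C 0 * R = 1 := by
  rw [← mulVec_surjective_iff_exists_right_inverse]
  refine (LinearMap.range_eq_top (f := (rescale C 0).mulVecLin)).mp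
    (Submodule.eq_top_of_finrank_eq ?_)
  simpa [rank] using (linearIndependent_rescale_zero hC).rank_matrix

end Normalized

section Dissipative

variable {n : ℕ} {C : Matrix (Fin (2 * n)) (Fin (2 * n) ⊕ Fin (2 * n)) ℂ}

lemma isDissipativeBC_iff :
    IsDissipativeBC n C ↔ ∀ w, C *ᵥ w = 0 → 0 ≤ qJ n (w ∘ Sum.inr) - qJ n (w ∘ Sum.inl) := by
  have hmulVec (u v : Fin (2 * n) → ℂ) : C *ᵥ Sum.elim u v
      = fun j => ∑ k, (C j (Sum.inl k) * u k + C j (Sum.inr k) * v k) := by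
    funext j
    simp [mulVec, dotProduct, Fintype.sum_sum_type, Finset.sum_add_distrib]
  constructor
  · intro h w hw
    rw [← Sum.elim_comp_inl_inr w, hmulVec] at hw
    exact h _ _ (congrFun hw)
  · intro h u v huv
    simpa using h (Sum.elim u v) (by rw [hmulVec]; exact funext huv)

@[fun_prop]
lemma continuous_qJ : Continuous (qJ n) := by
  unfold qJ
  fun_prop

lemma qJ_ofReal_pow_mul (t : ℝ) (u : Fin (2 * n) → ℂ) :
    qJ n (fun k => (t : ℂ) ^ (k : ℕ) * u k) = (t : ℂ) ^ (2 * n - 1) * qJ n u := by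
  unfold qJ
  simp only [Finset.mul_sum]
  refine Finset.sum_congr rfl fun p _ => ?_
  have hp : (p : ℕ) + p.rev = 2 * n - 1 := by rw [Fin.val_rev]; omega
  simp only [map_mul, map_pow, Complex.conj_ofReal, ← hp, pow_add]
  ring

lemma isDissipativeBC_rescale (hC : IsDissipativeBC n C) {τ : ℝ} (hτ : 0 < τ) :
    IsDissipativeBC n (rescale C τ) := by
  rw [isDissipativeBC_iff] at hC ⊢
  intro w hw
  have hτ' : (τ : ℂ) ≠ 0 := by exact_mod_cast hτ.ne'
  set w' : Fin (2 * n) ⊕ Fin (2 * n) → ℂ := fun col => ((τ⁻¹ : ℝ) : ℂ) ^ derivOrder col * w col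
  have hw' : C *ᵥ w' = 0 := by
    funext r
    have := congrFun (rescale_mulVec_pow C τ w') r
    simpa [w', hτ', hw] using this
  have hpow : (0 : ℂ) ≤ (τ : ℂ) ^ (2 * n - 1) := by exact_mod_cast pow_nonneg hτ.le _
  have hinr : qJ n (w' ∘ Sum.inr) = ((τ⁻¹ : ℝ) : ℂ) ^ (2 * n - 1) * qJ n (w ∘ Sum.inr) :=
    qJ_ofReal_pow_mul _ _
  have hinl : qJ n (w' ∘ Sum.inl) = ((τ⁻¹ : ℝ) : ℂ) ^ (2 * n - 1) * qJ n (w ∘ Sum.inl) :=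
    qJ_ofReal_pow_mul _ _
  have := mul_nonneg hpow (hC w' hw')
  rwa [hinr, hinl, ← mul_sub, ← mul_assoc, ← mul_pow, Complex.ofReal_inv,
    mul_inv_cancel₀ hτ', one_pow, one_mul] at this

lemma isDissipativeBC_rescale_zero (hN : IsNormalized C) (hC : IsDissipativeBC n C) :
    IsDissipativeBC n (rescale C 0) := by
  rw [isDissipativeBC_iff]
  intro w hw
  obtain ⟨R, hR⟩ := exists_rescale_zero_mul_eq_one hN
  have hA : Tendsto (fun τ : ℝ => rescale C τ) (𝓝[>] 0) (𝓝 (rescale C 0)) := by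
    have := ((continuous_rescale C).comp Complex.continuous_ofReal).tendsto 0
    simpa [Function.comp_def] using this.mono_left nhdsWithin_le_nhds
  obtain ⟨x, hx, hker⟩ := exists_tendsto_of_mulVec_eq_zero hA hR hw
  have hQ : Continuous fun w : Fin (2 * n) ⊕ Fin (2 * n) → ℂ =>
      qJ n (w ∘ Sum.inr) - qJ n (w ∘ Sum.inl) := by
    fun_prop
  refine ge_of_tendsto ((hQ.tendsto w).comp hx) ?_
  filter_upwards [hker, self_mem_nhdsWithin] with τ hτ hpos
  exact isDissipativeBC_iff.mp (isDissipativeBC_rescale hC hpos) _ hτ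

end Dissipative

section LeadingPairs

open Complex ComplexConjugate

lemma qJ_single_add_single_rev {n : ℕ} (p : Fin (2 * n)) (x y : ℂ) :
    qJ n (Pi.single p x + Pi.single p.rev y)
      = I * (-1) ^ (n + 1) * (-1) ^ ((p : ℕ) + 1) * (x * conj y - conj (x * conj y)) := by
  have hp : (p : ℕ) + p.rev = 2 * n - 1 := by rw [Fin.val_rev]; omega
  have hne := p.ne_rev_of_even (even_two_mul n)
  have hsign : (-1 : ℂ) ^ ((p.rev : ℕ) + 1) = -(-1) ^ ((p : ℕ) + 1) := by
    have hprod : (-1 : ℂ) ^ ((p : ℕ) + 1) * (-1) ^ ((p.rev : ℕ) + 1) = -1 := by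
      rw [← pow_add, show (p : ℕ) + 1 + (p.rev + 1) = 2 * n + 1 by omega, pow_succ, pow_mul]
      norm_num
    have hsq : ((-1 : ℂ) ^ ((p : ℕ) + 1)) ^ 2 = 1 := by
      rw [← pow_mul, mul_comm, pow_mul]
      norm_num
    linear_combination (-1 : ℂ) ^ ((p : ℕ) + 1) * hprod - (-1 : ℂ) ^ ((p.rev : ℕ) + 1) * hsq
  unfold qJ
  rw [Fintype.sum_eq_add p p.rev hne, hsign, Fin.rev_rev]
  · simp [hne, hne.symm]
    ring
  · intro q ⟨hq₁, hq₂⟩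
    simp [hq₁, hq₂]

lemma eq_zero_of_forall_nonneg_mul_sub_conj {s d : ℂ} (hs : s ≠ 0)
    (h : ∀ z, 0 ≤ s * (z * d - conj (z * d))) : d = 0 := by
  have hreal (z : ℂ) : z * d - conj (z * d) = 0 := by
    have hneg : s * (-z * d - conj (-z * d)) = -(s * (z * d - conj (z * d))) := by
      simp only [neg_mul, map_neg]
      ring
    have h' := h (-z)
    rw [hneg, neg_nonneg] at h'
    exact (mul_eq_zero.mp (le_antisymm h' (h z))).resolve_left hs
  have hd := hreal (I * conj d)
  rw [mul_assoc, ← normSq_eq_conj_mul_self, map_mul, conj_I, conj_ofReal] at hd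
  have hN : (normSq d : ℂ) = 0 := by linear_combination (-I / 2) * hd + (normSq d : ℂ) * I_sq
  exact normSq_eq_zero.mp (by exact_mod_cast hN)

lemma rowOrder_eq_iff_of_card_eq_one {m : ℕ} {C : Matrix (Fin m) (Fin m ⊕ Fin m) ℂ} {k : ℕ}
    (hk : (Finset.univ.filter fun r : Fin m => rowOrder C r = k).card = 1) {r₀ : Fin m}
    (h₀ : rowOrder C r₀ = k) (r : Fin m) : rowOrder C r = k ↔ r = r₀ :=
  ⟨fun h => Finset.card_le_one.mp hk.le _ (by simpa) _ (by simpa), fun h => h ▸ h₀⟩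

lemma rescale_zero_mulVec_single_add_single {m : ℕ} {C : Matrix (Fin m) (Fin m ⊕ Fin m) ℂ}
    {p q : Fin m} (hpq : p ≠ q) {r₁ r₂ : Fin m} (hr₁ : ∀ r, rowOrder C r = p ↔ r = r₁)
    (hr₂ : ∀ r, rowOrder C r = q ↔ r = r₂) {x₁ x₂ y₁ y₂ : ℂ}
    (h₁ : (leadingPair C r₁).1 * x₁ + (leadingPair C r₁).2 * y₁ = 0)
    (h₂ : (leadingPair C r₂).1 * x₂ + (leadingPair C r₂).2 * y₂ = 0) :
    rescale C 0 *ᵥ Sum.elim (Pi.single p x₁ + Pi.single q x₂) (Pi.single p y₁ + Pi.single q y₂)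
      = 0 := by
  funext r
  rw [rescale_zero_mulVec_apply]
  set k : Fin m := ⟨rowOrder C r, rowOrder_lt C r⟩
  by_cases hp : k = p
  · obtain rfl := (hr₁ r).mp (congrArg Fin.val hp)
    simpa [hp, hpq] using h₁
  by_cases hq : k = q
  · obtain rfl := (hr₂ r).mp (congrArg Fin.val hq)
    simpa [hq, hpq.symm] using h₂
  simp [hp, hq]

end LeadingPairs

end BoundaryConditions

open BoundaryConditions

theorem stmt16_general (n : ℕ)
    (C : Matrix (Fin (2 * n)) (Fin (2 * n) ⊕ Fin (2 * n)) ℂ)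
    (hnorm : IsNormalized C) (hdiss : IsDissipativeBC n C)
    (j : ℕ)
    (h1 : (Finset.univ.filter fun row : Fin (2 * n) => rowOrder C row = j).card = 1)
    (h2 : (Finset.univ.filter fun row : Fin (2 * n) =>
      rowOrder C row = 2 * n - 1 - j).card = 1)
    (rowb rowc : Fin (2 * n))
    (hb : rowOrder C rowb = j) (hc : rowOrder C rowc = 2 * n - 1 - j) :
    (leadingPair C rowb).1 * (starRingEnd ℂ) ((leadingPair C rowc).1)
      = (leadingPair C rowb).2 * (starRingEnd ℂ) ((leadingPair C rowc).2) := by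
  set p : Fin (2 * n) := ⟨j, hb ▸ rowOrder_lt C rowb⟩
  have hrev : (p.rev : ℕ) = 2 * n - 1 - j := by rw [Fin.val_rev, Fin.val_mk]; omega
  set b := leadingPair C rowb
  set c := leadingPair C rowc
  rw [← sub_eq_zero]
  refine eq_zero_of_forall_nonneg_mul_sub_conj (s := Complex.I * (-1) ^ (n + 1) * (-1) ^ (j + 1))
    (by simp) fun z => ?_
  have hker := rescale_zero_mulVec_single_add_single (p.ne_rev_of_even (even_two_mul n))
    (rowOrder_eq_iff_of_card_eq_one h1 hb) (hrev ▸ rowOrder_eq_iff_of_card_eq_one h2 hc)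
    (x₁ := z * b.2) (y₁ := -(z * b.1)) (x₂ := c.2) (y₂ := -c.1) (by ring) (by ring)
  have key := isDissipativeBC_iff.mp (isDissipativeBC_rescale_zero hnorm hdiss) _ hker
  simp only [Sum.elim_comp_inl, Sum.elim_comp_inr, qJ_single_add_single_rev] at key
  convert key using 1
  simp only [map_mul, map_neg, map_sub]
  ring

/-- for a normalized dissipative rank-`2n` system, if exactly one row
has order `j` and exactly one row has order `2n−1−j`, with leading pairs `(b₀, b₁)` and
`(c₀, c₁)` respectively, then `b₀·conj(c₀) = b₁·conj(c₁)`. -/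
theorem stmt16 (n : ℕ) (hn : 1 ≤ n)
    (C : Matrix (Fin (2 * n)) (Fin (2 * n) ⊕ Fin (2 * n)) ℂ)
    (hrank : C.rank = 2 * n) (hnorm : IsNormalized C) (hdiss : IsDissipativeBC n C)
    (j : ℕ) (hj : j < 2 * n)
    (h1 : (Finset.univ.filter fun row : Fin (2 * n) => rowOrder C row = j).card = 1)
    (h2 : (Finset.univ.filter fun row : Fin (2 * n) =>
      rowOrder C row = 2 * n - 1 - j).card = 1)
    (rowb rowc : Fin (2 * n))
    (hb : rowOrder C rowb = j) (hc : rowOrder C rowc = 2 * n - 1 - j) :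
    (leadingPair C rowb).1 * (starRingEnd ℂ) ((leadingPair C rowc).1)
      = (leadingPair C rowb).2 * (starRingEnd ℂ) ((leadingPair C rowc).2) :=
  stmt16_general n C hnorm hdiss j h1 h2 rowb rowc hb hc
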